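/- arXiv:1403.1841 — 3 statements merged into one kernel-verified Lean document; each statement's English description precedes it below -/
import Mathlib

section
/- Let B be a unital associative K-algebra and let Z ∈ B⊗H satisfy the k-twisted reflection axiom for some integer k, i.e. (id_B⊗Δ)(Z) = (1_B⊗D^k)·(R^{1,2})^{-1}·Z^{0,2}·R^{1,2}·Z^{0,1} in B⊗H⊗H. Then Z satisfies the reflection equation R^{2,1}·Z^{0,2}·R^{1,2}·Z^{0,1} = Z^{0,1}·R^{2,1}·Z^{0,2}·R^{1,2} in B⊗H⊗H. -/
open scoped TensorProduct
open Algebra.TensorProduct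

noncomputable section

namespace EllipticDouble

variable (K : Type*) [Field K] (H : Type*) [Ring H] [HopfAlgebra K H]

/-- Embedding of `H ⊗ H` into legs 1,2 of `H ⊗ H ⊗ H`. -/
def e12 : (H ⊗[K] H) →ₐ[K] H ⊗[K] (H ⊗[K] H) :=
  Algebra.TensorProduct.map (AlgHom.id K H) Algebra.TensorProduct.includeLeft

/-- Embedding of `H ⊗ H` into legs 1,3 of `H ⊗ H ⊗ H`. -/
def e13 : (H ⊗[K] H) →ₐ[K] H ⊗[K] (H ⊗[K] H) :=
  Algebra.TensorProduct.map (AlgHom.id K H) Algebra.TensorProduct.includeRight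

/-- Embedding of `H ⊗ H` into legs 2,3 of `H ⊗ H ⊗ H`. -/
def e23 : (H ⊗[K] H) →ₐ[K] H ⊗[K] (H ⊗[K] H) :=
  Algebra.TensorProduct.includeRight

/-- Quasitriangularity of an invertible element `R ∈ H ⊗ H`:
`τ(Δ(x)) = R Δ(x) R⁻¹`, `(Δ⊗id)(R) = R^{1,3} R^{2,3}` and `(id⊗Δ)(R) = R^{1,3} R^{1,2}`. -/
def IsQuasitriangular (R : (H ⊗[K] H)ˣ) : Prop :=
  (∀ x : H, (Algebra.TensorProduct.comm K H H) ((Bialgebra.comulAlgHom K H) x) * (R : H ⊗[K] H)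
      = (R : H ⊗[K] H) * (Bialgebra.comulAlgHom K H) x)
  ∧ (Algebra.TensorProduct.assoc K K K H H H)
      ((Algebra.TensorProduct.map (Bialgebra.comulAlgHom K H) (AlgHom.id K H)) (R : H ⊗[K] H))
      = e13 K H (R : H ⊗[K] H) * e23 K H (R : H ⊗[K] H)
  ∧ (Algebra.TensorProduct.map (AlgHom.id K H) (Bialgebra.comulAlgHom K H)) (R : H ⊗[K] H)
      = e13 K H (R : H ⊗[K] H) * e12 K H (R : H ⊗[K] H)

/-- The double braiding `D = R^{2,1} · R^{1,2}` as a unit of `H ⊗ H`. -/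
def Dbraid (R : (H ⊗[K] H)ˣ) : (H ⊗[K] H)ˣ :=
  (Units.map (Algebra.TensorProduct.comm K H H).toAlgHom.toRingHom.toMonoidHom R) * R

variable {K H}
variable {B : Type*} [Ring B] [Algebra K B]

/-- `Z^{0,1} = Z ⊗ 1 ∈ B ⊗ H ⊗ H`. -/
def leg01 (Z : B ⊗[K] H) : B ⊗[K] (H ⊗[K] H) :=
  (Algebra.TensorProduct.map (AlgHom.id K B)
    (Algebra.TensorProduct.includeLeft : H →ₐ[K] H ⊗[K] H)) Z

/-- `Z^{0,2} ∈ B ⊗ H ⊗ H`. -/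
def leg02 (Z : B ⊗[K] H) : B ⊗[K] (H ⊗[K] H) :=
  (Algebra.TensorProduct.map (AlgHom.id K B)
    (Algebra.TensorProduct.includeRight : H →ₐ[K] H ⊗[K] H)) Z

/-- `1_B ⊗ W ∈ B ⊗ H ⊗ H` for `W ∈ H ⊗ H`. -/
def inc2 (W : H ⊗[K] H) : B ⊗[K] (H ⊗[K] H) :=
  (Algebra.TensorProduct.includeRight : (H ⊗[K] H) →ₐ[K] B ⊗[K] (H ⊗[K] H)) W

/-- The `k`-twisted reflection axiom
`(id_B ⊗ Δ)(Z) = (1_B ⊗ D^k) · (R^{1,2})⁻¹ · Z^{0,2} · R^{1,2} · Z^{0,1}`. -/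
def ReflAxiom (R : (H ⊗[K] H)ˣ) (k : ℤ) (Z : B ⊗[K] H) : Prop :=
  (Algebra.TensorProduct.map (AlgHom.id K B) (Bialgebra.comulAlgHom K H)) Z
    = inc2 ((Dbraid K H R ^ k : (H ⊗[K] H)ˣ) : H ⊗[K] H)
      * inc2 ((R⁻¹ : (H ⊗[K] H)ˣ) : H ⊗[K] H)
      * leg02 Z * inc2 (R : H ⊗[K] H) * leg01 Z

/-- The reflection equation
`R^{2,1} Z^{0,2} R^{1,2} Z^{0,1} = Z^{0,1} R^{2,1} Z^{0,2} R^{1,2}`. -/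
def ReflEquation (R : (H ⊗[K] H)ˣ) (Z : B ⊗[K] H) : Prop :=
  inc2 ((Algebra.TensorProduct.comm K H H) (R : H ⊗[K] H)) * leg02 Z
      * inc2 (R : H ⊗[K] H) * leg01 Z
    = leg01 Z * inc2 ((Algebra.TensorProduct.comm K H H) (R : H ⊗[K] H)) * leg02 Z
      * inc2 (R : H ⊗[K] H)

/-- The elliptic commutation relation
`X^{0,1} R^{2,1} Y^{0,2} = R^{2,1} Y^{0,2} R^{1,2} X^{0,1} R^{2,1}`. -/
def EllRel (R : (H ⊗[K] H)ˣ) (X Y : B ⊗[K] H) : Prop :=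
  leg01 X * inc2 ((Algebra.TensorProduct.comm K H H) (R : H ⊗[K] H)) * leg02 Y
    = inc2 ((Algebra.TensorProduct.comm K H H) (R : H ⊗[K] H)) * leg02 Y
      * inc2 (R : H ⊗[K] H) * leg01 X
      * inc2 ((Algebra.TensorProduct.comm K H H) (R : H ⊗[K] H))

end EllipticDouble

namespace EllipticDouble

set_option maxHeartbeats 1000000

/-- If `Z ∈ B ⊗ H` satisfies the `k`-twisted reflection axiom for a
quasitriangular `R`, then `Z` satisfies the reflection equation. -/
theorem reflEquation_of_reflAxiom
    {K : Type*} [Field K] {H : Type*} [Ring H] [HopfAlgebra K H] [FiniteDimensional K H]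
    (R : (H ⊗[K] H)ˣ) (hR : IsQuasitriangular K H R)
    {B : Type*} [Ring B] [Algebra K B] (k : ℤ) (Z : B ⊗[K] H)
    (hZ : ReflAxiom R k Z) : ReflEquation R Z := by
  classical
  -- the flip of the two `H` legs
  set τ : (H ⊗[K] H) →ₐ[K] H ⊗[K] H := (Algebra.TensorProduct.comm K H H).toAlgHom with hτ
  set t : (B ⊗[K] (H ⊗[K] H)) →ₐ[K] B ⊗[K] (H ⊗[K] H) :=
    Algebra.TensorProduct.map (AlgHom.id K B) τ with ht
  have hττ : ∀ w : H ⊗[K] H, τ (τ w) = w := by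
    intro w
    induction w using TensorProduct.induction_on with
    | zero => simp
    | tmul a b => simp [hτ, Algebra.TensorProduct.comm_tmul]
    | add x y hx hy => simp [map_add, hx, hy]
  have htinc : ∀ w : H ⊗[K] H, t (inc2 (B := B) w) = inc2 (τ w) := by
    intro w
    simp [ht, inc2, Algebra.TensorProduct.includeRight_apply,
      Algebra.TensorProduct.map_tmul]
  have ht01 : ∀ z : B ⊗[K] H, t (leg01 z) = leg02 z := by
    intro z
    induction z using TensorProduct.induction_on with
    | zero => simp [leg01, leg02]
    | tmul b h =>
      simp [leg01, leg02, ht, hτ, Algebra.TensorProduct.map_tmul,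
        Algebra.TensorProduct.includeLeft_apply, Algebra.TensorProduct.includeRight_apply,
        Algebra.TensorProduct.comm_tmul]
    | add x y hx hy => simp only [leg01, leg02, map_add] at *; rw [hx, hy]
  have ht02 : ∀ z : B ⊗[K] H, t (leg02 z) = leg01 z := by
    intro z
    induction z using TensorProduct.induction_on with
    | zero => simp [leg01, leg02]
    | tmul b h =>
      simp [leg01, leg02, ht, hτ, Algebra.TensorProduct.map_tmul,
        Algebra.TensorProduct.includeLeft_apply, Algebra.TensorProduct.includeRight_apply,
        Algebra.TensorProduct.comm_tmul]
    | add x y hx hy => simp only [leg01, leg02, map_add] at *; rw [hx, hy]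
  -- the comultiplication map on the `H` leg
  set cm : (B ⊗[K] H) →ₐ[K] B ⊗[K] (H ⊗[K] H) :=
    Algebra.TensorProduct.map (AlgHom.id K B) (Bialgebra.comulAlgHom K H) with hcm
  -- intertwining relation coming from quasitriangularity
  have hint : ∀ z : B ⊗[K] H,
      t (cm z) * inc2 (R : H ⊗[K] H) = inc2 (R : H ⊗[K] H) * cm z := by
    intro z
    induction z using TensorProduct.induction_on with
    | zero => simp
    | tmul b h =>
      have h1 : τ ((Bialgebra.comulAlgHom K H) h) * (R : H ⊗[K] H)
          = (R : H ⊗[K] H) * (Bialgebra.comulAlgHom K H) h := hR.1 h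
      simp only [hcm, ht, inc2, Algebra.TensorProduct.map_tmul, AlgHom.coe_id, id_eq,
        Algebra.TensorProduct.includeRight_apply, Algebra.TensorProduct.tmul_mul_tmul,
        one_mul, mul_one]
      rw [h1]
    | add x y hx hy =>
      simp only [map_add, add_mul, mul_add] at *
      rw [hx, hy]
  -- units in `H ⊗ H`
  set τm : (H ⊗[K] H) →* H ⊗[K] H := τ.toRingHom.toMonoidHom with hτm
  set Rt : (H ⊗[K] H)ˣ := Units.map τm R with hRt
  set D : (H ⊗[K] H)ˣ := Dbraid K H R with hD
  have hDdef : D = Rt * R := rfl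
  have hτRt : Units.map τm Rt = R := by
    ext
    exact hττ (R : H ⊗[K] H)
  have hτD : Units.map τm (D ^ k) = R * D ^ k * R⁻¹ := by
    have h1 : Units.map τm D = R * D * R⁻¹ := by
      rw [hDdef, map_mul, hτRt, ← hRt]
      group
    rw [map_zpow, h1, conj_zpow]
  -- units in `B ⊗ H ⊗ H`
  set ι2 : (H ⊗[K] H) →* B ⊗[K] (H ⊗[K] H) :=
    (Algebra.TensorProduct.includeRight :
      (H ⊗[K] H) →ₐ[K] B ⊗[K] (H ⊗[K] H)).toRingHom.toMonoidHom with hι2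
  have hinc2 : ∀ w : H ⊗[K] H, inc2 (B := B) w = ι2 w := fun _ => rfl
  set UR : (B ⊗[K] (H ⊗[K] H))ˣ := Units.map ι2 R with hUR
  set URt : (B ⊗[K] (H ⊗[K] H))ˣ := Units.map ι2 Rt with hURt
  set UD : (B ⊗[K] (H ⊗[K] H))ˣ := Units.map ι2 D with hUD
  have e1 : inc2 (B := B) ((R : (H ⊗[K] H)ˣ) : H ⊗[K] H) = (UR : B ⊗[K] (H ⊗[K] H)) := rfl
  have e2 : inc2 (B := B) ((R⁻¹ : (H ⊗[K] H)ˣ) : H ⊗[K] H)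
      = ((UR⁻¹ : (B ⊗[K] (H ⊗[K] H))ˣ) : B ⊗[K] (H ⊗[K] H)) := by
    exact (hinc2 _).trans (Units.coe_map_inv ι2 R).symm
  have e3 : inc2 (B := B) ((Rt : (H ⊗[K] H)ˣ) : H ⊗[K] H) = (URt : B ⊗[K] (H ⊗[K] H)) := rfl
  have e4 : inc2 (B := B) ((Rt⁻¹ : (H ⊗[K] H)ˣ) : H ⊗[K] H)
      = ((URt⁻¹ : (B ⊗[K] (H ⊗[K] H))ˣ) : B ⊗[K] (H ⊗[K] H)) := by
    exact (hinc2 _).trans (Units.coe_map_inv ι2 Rt).symm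
  have e5 : inc2 (B := B) ((D ^ k : (H ⊗[K] H)ˣ) : H ⊗[K] H)
      = ((UD ^ k : (B ⊗[K] (H ⊗[K] H))ˣ) : B ⊗[K] (H ⊗[K] H)) := by
    rw [hinc2, hUD, ← map_zpow, Units.coe_map]
  have e6 : inc2 (B := B) ((R * D ^ k * R⁻¹ : (H ⊗[K] H)ˣ) : H ⊗[K] H)
      = ((UR * UD ^ k * UR⁻¹ : (B ⊗[K] (H ⊗[K] H))ˣ) : B ⊗[K] (H ⊗[K] H)) := by
    rw [hinc2, hUR, hUD, ← map_zpow, ← map_inv, ← map_mul, ← map_mul, Units.coe_map]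
  -- first expression for `t (cm Z)` : apply `t` to the reflection axiom
  have hτDk : τ ((D ^ k : (H ⊗[K] H)ˣ) : H ⊗[K] H)
      = ((R * D ^ k * R⁻¹ : (H ⊗[K] H)ˣ) : H ⊗[K] H) := by
    rw [← hτD]; rfl
  have hτR : τ ((R : (H ⊗[K] H)ˣ) : H ⊗[K] H) = ((Rt : (H ⊗[K] H)ˣ) : H ⊗[K] H) := rfl
  have hτRinv : τ ((R⁻¹ : (H ⊗[K] H)ˣ) : H ⊗[K] H)
      = ((Rt⁻¹ : (H ⊗[K] H)ˣ) : H ⊗[K] H) := by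
    rw [hRt, ← map_inv, Units.coe_map]; rfl
  have hA : t (cm Z)
      = ((UR * UD ^ k * UR⁻¹ : (B ⊗[K] (H ⊗[K] H))ˣ) : B ⊗[K] (H ⊗[K] H))
        * ((URt⁻¹ : (B ⊗[K] (H ⊗[K] H))ˣ) : B ⊗[K] (H ⊗[K] H))
        * leg01 Z * (URt : B ⊗[K] (H ⊗[K] H)) * leg02 Z := by
    have h := congrArg t hZ
    rw [map_mul, map_mul, map_mul, map_mul, htinc, htinc, htinc, ht01 Z, ht02 Z,
      hτDk, hτRinv, hτR, e6, e4, e3] at h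
    exact h
  -- second expression for `t (cm Z)` : intertwining plus the axiom
  have hB : t (cm Z)
      = (UR : B ⊗[K] (H ⊗[K] H))
        * (((UD ^ k : (B ⊗[K] (H ⊗[K] H))ˣ) : B ⊗[K] (H ⊗[K] H))
          * ((UR⁻¹ : (B ⊗[K] (H ⊗[K] H))ˣ) : B ⊗[K] (H ⊗[K] H))
          * leg02 Z * (UR : B ⊗[K] (H ⊗[K] H)) * leg01 Z)
        * ((UR⁻¹ : (B ⊗[K] (H ⊗[K] H))ˣ) : B ⊗[K] (H ⊗[K] H)) := by
    have h2 : t (cm Z) = inc2 ((R : (H ⊗[K] H)ˣ) : H ⊗[K] H) * cm Z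
        * ((UR⁻¹ : (B ⊗[K] (H ⊗[K] H))ˣ) : B ⊗[K] (H ⊗[K] H)) := by
      rw [← hint Z, e1, mul_assoc, Units.mul_inv, mul_one]
    rw [h2, hZ, e1, e2, e5]
  -- cancel the invertible prefix
  have hC : ((UR * UD ^ k * UR⁻¹ : (B ⊗[K] (H ⊗[K] H))ˣ) : B ⊗[K] (H ⊗[K] H))
        * (((URt⁻¹ : (B ⊗[K] (H ⊗[K] H))ˣ) : B ⊗[K] (H ⊗[K] H)) * leg01 Z
          * (URt : B ⊗[K] (H ⊗[K] H)) * leg02 Z)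
      = ((UR * UD ^ k * UR⁻¹ : (B ⊗[K] (H ⊗[K] H))ˣ) : B ⊗[K] (H ⊗[K] H))
        * (leg02 Z * (UR : B ⊗[K] (H ⊗[K] H)) * leg01 Z
          * ((UR⁻¹ : (B ⊗[K] (H ⊗[K] H))ˣ) : B ⊗[K] (H ⊗[K] H))) := by
    calc ((UR * UD ^ k * UR⁻¹ : (B ⊗[K] (H ⊗[K] H))ˣ) : B ⊗[K] (H ⊗[K] H))
          * (((URt⁻¹ : (B ⊗[K] (H ⊗[K] H))ˣ) : B ⊗[K] (H ⊗[K] H)) * leg01 Z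
            * (URt : B ⊗[K] (H ⊗[K] H)) * leg02 Z)
        = t (cm Z) := by rw [hA]; simp only [Units.val_mul, mul_assoc]
      _ = _ := by rw [hB]; simp only [Units.val_mul, mul_assoc]
  have hE := (Units.mul_right_inj (UR * UD ^ k * UR⁻¹)).mp hC
  -- conclude
  unfold ReflEquation
  have hcommR : (Algebra.TensorProduct.comm K H H) ((R : (H ⊗[K] H)ˣ) : H ⊗[K] H)
      = ((Rt : (H ⊗[K] H)ˣ) : H ⊗[K] H) := rfl
  rw [hcommR, e3, e1]
  have final := congrArg (fun x => (URt : B ⊗[K] (H ⊗[K] H)) * x * (UR : B ⊗[K] (H ⊗[K] H))) hE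
  simp only [mul_assoc, Units.mul_inv_cancel_left, Units.inv_mul_cancel_left,
    Units.inv_mul, Units.mul_inv, mul_one] at final
  simp only [mul_assoc]
  exact final.symm

end EllipticDouble
end
end

section
/- The element F = R^{1,3}·R^{1,4} ∈ H^{⊗4} (i.e. F = Σ r₁r′₁ ⊗ 1 ⊗ r₂ ⊗ r′₂ where R = Σ r₁⊗r₂ = Σ r′₁⊗r′₂) is a twist for the Hopf algebra H^e = H^{coop}⊗H: it is invertible and satisfies the cocycle condition (Δ_{H^e}⊗id_{H^e})(F)·(F⊗1_{H^e}) = (id_{H^e}⊗Δ_{H^e})(F)·(1_{H^e}⊗F) in (H^e)^{⊗3} = H^{⊗6}, together with the counit conditions ((ε⊗ε)⊗id)(F) = 1_{H^e} and (id⊗(ε⊗ε))(F) = 1_{H^e}. -/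
open scoped TensorProduct
open Algebra.TensorProduct

noncomputable section

namespace EllipticDouble

variable (K : Type*) [Field K] (H : Type*) [Ring H] [HopfAlgebra K H]

/-- Embedding of `H ⊗ H` into legs (1,3) of `H⁴ = (H⊗H) ⊗ (H⊗H)`. -/
def f13 : (H ⊗[K] H) →ₐ[K] (H ⊗[K] H) ⊗[K] (H ⊗[K] H) :=
  Algebra.TensorProduct.map Algebra.TensorProduct.includeLeft Algebra.TensorProduct.includeLeft

/-- Embedding of `H ⊗ H` into legs (1,4) of `H⁴`. -/
def f14 : (H ⊗[K] H) →ₐ[K] (H ⊗[K] H) ⊗[K] (H ⊗[K] H) :=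
  Algebra.TensorProduct.map Algebra.TensorProduct.includeLeft Algebra.TensorProduct.includeRight

/-- Embedding of `H ⊗ H` into legs (2,3) of `H⁴`. -/
def f23 : (H ⊗[K] H) →ₐ[K] (H ⊗[K] H) ⊗[K] (H ⊗[K] H) :=
  Algebra.TensorProduct.map Algebra.TensorProduct.includeRight Algebra.TensorProduct.includeLeft

/-- Embedding of `H ⊗ H` into legs (2,4) of `H⁴`. -/
def f24 : (H ⊗[K] H) →ₐ[K] (H ⊗[K] H) ⊗[K] (H ⊗[K] H) :=
  Algebra.TensorProduct.map Algebra.TensorProduct.includeRight Algebra.TensorProduct.includeRight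

/-- Embedding of `H ⊗ H` into legs (3,1) of `H⁴` (first tensor factor to leg 3). -/
def f31 : (H ⊗[K] H) →ₐ[K] (H ⊗[K] H) ⊗[K] (H ⊗[K] H) :=
  (f13 K H).comp (Algebra.TensorProduct.comm K H H).toAlgHom

/-- Embedding of `H ⊗ H` into legs (3,2) of `H⁴`. -/
def f32 : (H ⊗[K] H) →ₐ[K] (H ⊗[K] H) ⊗[K] (H ⊗[K] H) :=
  (f23 K H).comp (Algebra.TensorProduct.comm K H H).toAlgHom

/-- Embedding of `H ⊗ H` into legs (4,2) of `H⁴`. -/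
def f42 : (H ⊗[K] H) →ₐ[K] (H ⊗[K] H) ⊗[K] (H ⊗[K] H) :=
  (f24 K H).comp (Algebra.TensorProduct.comm K H H).toAlgHom

/-- The coproduct of `H^e = H^{coop} ⊗ H`: `x ⊗ y ↦ Σ (x₂ ⊗ y₁) ⊗ (x₁ ⊗ y₂)`. -/
def deltaHe : (H ⊗[K] H) →ₐ[K] (H ⊗[K] H) ⊗[K] (H ⊗[K] H) :=
  (Algebra.TensorProduct.tensorTensorTensorComm K K K K H H H H).toAlgHom.comp
    (Algebra.TensorProduct.map
      ((Algebra.TensorProduct.comm K H H).toAlgHom.comp (Bialgebra.comulAlgHom K H))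
      (Bialgebra.comulAlgHom K H))

/-- The counit `ε ⊗ ε` of `H^e`. -/
def counitHe : (H ⊗[K] H) →ₐ[K] K :=
  (Algebra.TensorProduct.lid K K).toAlgHom.comp
    (Algebra.TensorProduct.map (Bialgebra.counitAlgHom K H) (Bialgebra.counitAlgHom K H))

end EllipticDouble


set_option maxHeartbeats 1000000
set_option maxRecDepth 4000
set_option synthInstance.maxHeartbeats 1000000

namespace EllipticDouble

variable (K : Type*) [Field K] (H : Type*) [Ring H] [HopfAlgebra K H]

/-! Auxiliary embeddings of `H ⊗ H` into legs `(i,j)` of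
`H⁶ = (H⊗H) ⊗ ((H⊗H) ⊗ (H⊗H))` (legs `(1,2),(3,4),(5,6)`). -/

def g13x : (H ⊗[K] H) →ₐ[K] (H ⊗[K] H) ⊗[K] ((H ⊗[K] H) ⊗[K] (H ⊗[K] H)) :=
  Algebra.TensorProduct.map Algebra.TensorProduct.includeLeft
    (Algebra.TensorProduct.includeLeft.comp Algebra.TensorProduct.includeLeft)
def g14x : (H ⊗[K] H) →ₐ[K] (H ⊗[K] H) ⊗[K] ((H ⊗[K] H) ⊗[K] (H ⊗[K] H)) :=
  Algebra.TensorProduct.map Algebra.TensorProduct.includeLeft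
    (Algebra.TensorProduct.includeLeft.comp Algebra.TensorProduct.includeRight)
def g15x : (H ⊗[K] H) →ₐ[K] (H ⊗[K] H) ⊗[K] ((H ⊗[K] H) ⊗[K] (H ⊗[K] H)) :=
  Algebra.TensorProduct.map Algebra.TensorProduct.includeLeft
    (Algebra.TensorProduct.includeRight.comp Algebra.TensorProduct.includeLeft)
def g16x : (H ⊗[K] H) →ₐ[K] (H ⊗[K] H) ⊗[K] ((H ⊗[K] H) ⊗[K] (H ⊗[K] H)) :=
  Algebra.TensorProduct.map Algebra.TensorProduct.includeLeft
    (Algebra.TensorProduct.includeRight.comp Algebra.TensorProduct.includeRight)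
def g35x : (H ⊗[K] H) →ₐ[K] (H ⊗[K] H) ⊗[K] ((H ⊗[K] H) ⊗[K] (H ⊗[K] H)) :=
  Algebra.TensorProduct.includeRight.comp
    (Algebra.TensorProduct.map Algebra.TensorProduct.includeLeft
      Algebra.TensorProduct.includeLeft)
def g36x : (H ⊗[K] H) →ₐ[K] (H ⊗[K] H) ⊗[K] ((H ⊗[K] H) ⊗[K] (H ⊗[K] H)) :=
  Algebra.TensorProduct.includeRight.comp
    (Algebra.TensorProduct.map Algebra.TensorProduct.includeLeft
      Algebra.TensorProduct.includeRight)
def g56x : (H ⊗[K] H) →ₐ[K] (H ⊗[K] H) ⊗[K] ((H ⊗[K] H) ⊗[K] (H ⊗[K] H)) :=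
  Algebra.TensorProduct.includeRight.comp Algebra.TensorProduct.includeRight

/-! Embeddings of `H ⊗ H ⊗ H` into legs `(a,b,c)` of `H⁶`. -/

def p135 : (H ⊗[K] (H ⊗[K] H)) →ₐ[K] (H ⊗[K] H) ⊗[K] ((H ⊗[K] H) ⊗[K] (H ⊗[K] H)) :=
  Algebra.TensorProduct.map Algebra.TensorProduct.includeLeft
    (Algebra.TensorProduct.map Algebra.TensorProduct.includeLeft
      Algebra.TensorProduct.includeLeft)
def p136 : (H ⊗[K] (H ⊗[K] H)) →ₐ[K] (H ⊗[K] H) ⊗[K] ((H ⊗[K] H) ⊗[K] (H ⊗[K] H)) :=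
  Algebra.TensorProduct.map Algebra.TensorProduct.includeLeft
    (Algebra.TensorProduct.map Algebra.TensorProduct.includeLeft
      Algebra.TensorProduct.includeRight)
def p153 : (H ⊗[K] (H ⊗[K] H)) →ₐ[K] (H ⊗[K] H) ⊗[K] ((H ⊗[K] H) ⊗[K] (H ⊗[K] H)) :=
  Algebra.TensorProduct.map Algebra.TensorProduct.includeLeft
    ((Algebra.TensorProduct.map Algebra.TensorProduct.includeLeft
      Algebra.TensorProduct.includeLeft).comp (Algebra.TensorProduct.comm K H H).toAlgHom)
def p146 : (H ⊗[K] (H ⊗[K] H)) →ₐ[K] (H ⊗[K] H) ⊗[K] ((H ⊗[K] H) ⊗[K] (H ⊗[K] H)) :=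
  Algebra.TensorProduct.map Algebra.TensorProduct.includeLeft
    (Algebra.TensorProduct.map Algebra.TensorProduct.includeRight
      Algebra.TensorProduct.includeRight)

/-- swap the first two legs of `H ⊗ H ⊗ H`. -/
def sw12 : (H ⊗[K] (H ⊗[K] H)) →ₐ[K] H ⊗[K] (H ⊗[K] H) :=
  (Algebra.TensorProduct.assoc K K K H H H).toAlgHom.comp
    ((Algebra.TensorProduct.map (Algebra.TensorProduct.comm K H H).toAlgHom (AlgHom.id K H)).comp
      (Algebra.TensorProduct.assoc K K K H H H).symm.toAlgHom)

def p315 : (H ⊗[K] (H ⊗[K] H)) →ₐ[K] (H ⊗[K] H) ⊗[K] ((H ⊗[K] H) ⊗[K] (H ⊗[K] H)) :=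
  (p135 K H).comp (sw12 K H)
def p316 : (H ⊗[K] (H ⊗[K] H)) →ₐ[K] (H ⊗[K] H) ⊗[K] ((H ⊗[K] H) ⊗[K] (H ⊗[K] H)) :=
  (p136 K H).comp (sw12 K H)

/-- `ε` on the first leg, then collapse. -/
def c1x : (H ⊗[K] H) →ₐ[K] H :=
  (Algebra.TensorProduct.lid K H).toAlgHom.comp
    (Algebra.TensorProduct.map (Bialgebra.counitAlgHom K H) (AlgHom.id K H))

/-- `ε` on the second leg, then collapse. -/
def c2x : (H ⊗[K] H) →ₐ[K] H :=
  (Algebra.TensorProduct.rid K K H).toAlgHom.comp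
    (Algebra.TensorProduct.map (AlgHom.id K H) (Bialgebra.counitAlgHom K H))

/-- `ε` on the middle leg of `H ⊗ H ⊗ H`. -/
def qx : (H ⊗[K] (H ⊗[K] H)) →ₐ[K] H ⊗[K] H :=
  Algebra.TensorProduct.map (AlgHom.id K H) (c1x K H)

variable {K H}

lemma tzero_mul (a : (H ⊗[K] H) ⊗[K] ((H ⊗[K] H) ⊗[K] (H ⊗[K] H))) : 0 * a = 0 := zero_mul a
lemma tmul_zero' (a : (H ⊗[K] H) ⊗[K] ((H ⊗[K] H) ⊗[K] (H ⊗[K] H))) : a * 0 = 0 := mul_zero a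
lemma tadd_mul (a b c : (H ⊗[K] H) ⊗[K] ((H ⊗[K] H) ⊗[K] (H ⊗[K] H))) :
    (a + b) * c = a * c + b * c := Distrib.right_distrib a b c
lemma tmul_add' (a b c : (H ⊗[K] H) ⊗[K] ((H ⊗[K] H) ⊗[K] (H ⊗[K] H))) :
    a * (b + c) = a * b + a * c := Distrib.left_distrib a b c
lemma massoc (a b c : (H ⊗[K] H) ⊗[K] ((H ⊗[K] H) ⊗[K] (H ⊗[K] H))) :
    a * b * c = a * (b * c) := mul_assoc a b c
lemma mswap {a b : (H ⊗[K] H) ⊗[K] ((H ⊗[K] H) ⊗[K] (H ⊗[K] H))} (h : a * b = b * a)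
    (c : (H ⊗[K] H) ⊗[K] ((H ⊗[K] H) ⊗[K] (H ⊗[K] H))) : a * (b * c) = b * (a * c) := by
  rw [← massoc, h, massoc]

lemma mul_comm₂
    (f g : (H ⊗[K] H) →ₐ[K] (H ⊗[K] H) ⊗[K] ((H ⊗[K] H) ⊗[K] (H ⊗[K] H)))
    (h : ∀ a b c d : H, f (a ⊗ₜ b) * g (c ⊗ₜ d) = g (c ⊗ₜ d) * f (a ⊗ₜ b)) :
    ∀ u v, f u * g v = g v * f u := by
  intro u v
  induction u using TensorProduct.induction_on with
  | zero => rw [map_zero, tzero_mul, tmul_zero']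
  | tmul a b =>
    induction v using TensorProduct.induction_on with
    | zero => rw [map_zero, tzero_mul, tmul_zero']
    | tmul c d => exact h a b c d
    | add v₁ v₂ h₁ h₂ => rw [map_add, tmul_add', tadd_mul, h₁, h₂]
  | add u₁ u₂ h₁ h₂ => rw [map_add, tadd_mul, tmul_add', h₁, h₂]

lemma comm_g13_g56 (u w : H ⊗[K] H) : g13x K H u * g56x K H w = g56x K H w * g13x K H u :=
  mul_comm₂ (g13x K H) (g56x K H)
    (fun a b c d => by simp [g13x, g56x, Algebra.TensorProduct.one_def]) u w

lemma comm_g35_g16 (u w : H ⊗[K] H) : g35x K H u * g16x K H w = g16x K H w * g35x K H u :=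
  mul_comm₂ (g35x K H) (g16x K H)
    (fun a b c d => by simp [g35x, g16x, Algebra.TensorProduct.one_def]) u w

lemma comm_g14_g35 (u w : H ⊗[K] H) : g14x K H u * g35x K H w = g35x K H w * g14x K H u :=
  mul_comm₂ (g14x K H) (g35x K H)
    (fun a b c d => by simp [g14x, g35x, Algebra.TensorProduct.one_def]) u w

lemma comm_g14_g36 (u w : H ⊗[K] H) : g14x K H u * g36x K H w = g36x K H w * g14x K H u :=
  mul_comm₂ (g14x K H) (g36x K H)
    (fun a b c d => by simp [g14x, g36x, Algebra.TensorProduct.one_def]) u w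

variable (K H)

/-- `Δ` into legs (1,3), rest into legs (5,6). -/
def Phi : (H ⊗[K] (H ⊗[K] H)) →ₐ[K] (H ⊗[K] H) ⊗[K] ((H ⊗[K] H) ⊗[K] (H ⊗[K] H)) :=
  Algebra.TensorProduct.lift ((g13x K H).comp (Bialgebra.comulAlgHom K H)) (g56x K H)
    (fun x w => show Commute _ _ from (comm_g13_g56 _ w))

/-- `Δ^{cop}` into legs (1,3), rest into legs (5,6). -/
def PhiCop : (H ⊗[K] (H ⊗[K] H)) →ₐ[K] (H ⊗[K] H) ⊗[K] ((H ⊗[K] H) ⊗[K] (H ⊗[K] H)) :=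
  Algebra.TensorProduct.lift
    ((g13x K H).comp ((Algebra.TensorProduct.comm K H H).toAlgHom.comp
      (Bialgebra.comulAlgHom K H))) (g56x K H)
    (fun x w => show Commute _ _ from (comm_g13_g56 _ w))

variable {K H}

/-! ### Leg computations for the `p` embeddings -/

lemma p315_e13 (v : H ⊗[K] H) : p315 K H (e13 K H v) = g35x K H v := by
  induction v using TensorProduct.induction_on with
  | zero => simp
  | tmul a b => simp [p315, p135, sw12, e13, g35x, Algebra.TensorProduct.one_def]
  | add a b ha hb => simp only [map_add, ha, hb]

lemma p315_e23 (v : H ⊗[K] H) : p315 K H (e23 K H v) = g15x K H v := by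
  induction v using TensorProduct.induction_on with
  | zero => simp
  | tmul a b => simp [p315, p135, sw12, e23, g15x, Algebra.TensorProduct.one_def]
  | add a b ha hb => simp only [map_add, ha, hb]

lemma p316_e13 (v : H ⊗[K] H) : p316 K H (e13 K H v) = g36x K H v := by
  induction v using TensorProduct.induction_on with
  | zero => simp
  | tmul a b => simp [p316, p136, sw12, e13, g36x, Algebra.TensorProduct.one_def]
  | add a b ha hb => simp only [map_add, ha, hb]

lemma p316_e23 (v : H ⊗[K] H) : p316 K H (e23 K H v) = g16x K H v := by
  induction v using TensorProduct.induction_on with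
  | zero => simp
  | tmul a b => simp [p316, p136, sw12, e23, g16x, Algebra.TensorProduct.one_def]
  | add a b ha hb => simp only [map_add, ha, hb]

lemma p153_e13 (v : H ⊗[K] H) : p153 K H (e13 K H v) = g13x K H v := by
  induction v using TensorProduct.induction_on with
  | zero => simp
  | tmul a b => simp [p153, e13, g13x, Algebra.TensorProduct.one_def]
  | add a b ha hb => simp only [map_add, ha, hb]

lemma p153_e12 (v : H ⊗[K] H) : p153 K H (e12 K H v) = g15x K H v := by
  induction v using TensorProduct.induction_on with
  | zero => simp
  | tmul a b => simp [p153, e12, g15x, Algebra.TensorProduct.one_def]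
  | add a b ha hb => simp only [map_add, ha, hb]

lemma p146_e13 (v : H ⊗[K] H) : p146 K H (e13 K H v) = g16x K H v := by
  induction v using TensorProduct.induction_on with
  | zero => simp
  | tmul a b => simp [p146, e13, g16x, Algebra.TensorProduct.one_def]
  | add a b ha hb => simp only [map_add, ha, hb]

lemma p146_e12 (v : H ⊗[K] H) : p146 K H (e12 K H v) = g14x K H v := by
  induction v using TensorProduct.induction_on with
  | zero => simp
  | tmul a b => simp [p146, e12, g14x, Algebra.TensorProduct.one_def]
  | add a b ha hb => simp only [map_add, ha, hb]

lemma p135_e13 (v : H ⊗[K] H) : p135 K H (e13 K H v) = g15x K H v := by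
  induction v using TensorProduct.induction_on with
  | zero => simp
  | tmul a b => simp [p135, e13, g15x, Algebra.TensorProduct.one_def]
  | add a b ha hb => simp only [map_add, ha, hb]

lemma p135_e23 (v : H ⊗[K] H) : p135 K H (e23 K H v) = g35x K H v := by
  induction v using TensorProduct.induction_on with
  | zero => simp
  | tmul a b => simp [p135, e23, g35x, Algebra.TensorProduct.one_def]
  | add a b ha hb => simp only [map_add, ha, hb]

lemma p136_e13 (v : H ⊗[K] H) : p136 K H (e13 K H v) = g16x K H v := by
  induction v using TensorProduct.induction_on with
  | zero => simp
  | tmul a b => simp [p136, e13, g16x, Algebra.TensorProduct.one_def]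
  | add a b ha hb => simp only [map_add, ha, hb]

lemma p136_e23 (v : H ⊗[K] H) : p136 K H (e23 K H v) = g36x K H v := by
  induction v using TensorProduct.induction_on with
  | zero => simp
  | tmul a b => simp [p136, e23, g36x, Algebra.TensorProduct.one_def]
  | add a b ha hb => simp only [map_add, ha, hb]

/-! ### The four coproduct computations -/

lemma L1a (u : H ⊗[K] H) :
    (Algebra.TensorProduct.assoc K K K (H ⊗[K] H) (H ⊗[K] H) (H ⊗[K] H))
      ((Algebra.TensorProduct.map (deltaHe K H) (AlgHom.id K (H ⊗[K] H))) (f13 K H u))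
    = p315 K H ((Algebra.TensorProduct.assoc K K K H H H)
        ((Algebra.TensorProduct.map (Bialgebra.comulAlgHom K H) (AlgHom.id K H)) u)) := by
  induction u using TensorProduct.induction_on with
  | zero => simp
  | add u v hu hv => simp only [map_add, hu, hv]
  | tmul x y =>
    simp only [f13, map_tmul, includeLeft_apply, deltaHe, AlgHom.coe_comp, AlgHom.coe_id,
      AlgEquiv.toAlgHom_eq_coe, AlgHom.coe_coe, Function.comp_apply, Bialgebra.comulAlgHom_apply,
      map_one, id_eq]
    generalize (CoalgebraStruct.comul x : H ⊗[K] H) = w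
    induction w using TensorProduct.induction_on with
    | zero => simp
    | tmul a b => simp [p315, p135, sw12, Algebra.TensorProduct.one_def]
    | add w₁ w₂ h₁ h₂ => simp only [map_add, TensorProduct.add_tmul, TensorProduct.tmul_add, h₁, h₂]

lemma L1b (u : H ⊗[K] H) :
    (Algebra.TensorProduct.assoc K K K (H ⊗[K] H) (H ⊗[K] H) (H ⊗[K] H))
      ((Algebra.TensorProduct.map (deltaHe K H) (AlgHom.id K (H ⊗[K] H))) (f14 K H u))
    = p316 K H ((Algebra.TensorProduct.assoc K K K H H H)
        ((Algebra.TensorProduct.map (Bialgebra.comulAlgHom K H) (AlgHom.id K H)) u)) := by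
  induction u using TensorProduct.induction_on with
  | zero => simp
  | add u v hu hv => simp only [map_add, hu, hv]
  | tmul x y =>
    simp only [f14, map_tmul, includeLeft_apply, includeRight_apply, deltaHe, AlgHom.coe_comp,
      AlgHom.coe_id, AlgEquiv.toAlgHom_eq_coe, AlgHom.coe_coe, Function.comp_apply,
      Bialgebra.comulAlgHom_apply, map_one, id_eq]
    generalize (CoalgebraStruct.comul x : H ⊗[K] H) = w
    induction w using TensorProduct.induction_on with
    | zero => simp
    | tmul a b => simp [p316, p136, sw12, Algebra.TensorProduct.one_def]
    | add w₁ w₂ h₁ h₂ => simp only [map_add, TensorProduct.add_tmul, TensorProduct.tmul_add, h₁, h₂]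

lemma L2a (u : H ⊗[K] H) :
    (Algebra.TensorProduct.map (AlgHom.id K (H ⊗[K] H)) (deltaHe K H)) (f13 K H u)
    = p153 K H ((Algebra.TensorProduct.map (AlgHom.id K H) (Bialgebra.comulAlgHom K H)) u) := by
  induction u using TensorProduct.induction_on with
  | zero => simp
  | add u v hu hv => simp only [map_add, hu, hv]
  | tmul x y =>
    simp only [f13, map_tmul, includeLeft_apply, deltaHe, AlgHom.coe_comp, AlgHom.coe_id,
      AlgEquiv.toAlgHom_eq_coe, AlgHom.coe_coe, Function.comp_apply, Bialgebra.comulAlgHom_apply,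
      map_one, id_eq]
    generalize (CoalgebraStruct.comul y : H ⊗[K] H) = w
    induction w using TensorProduct.induction_on with
    | zero => simp
    | tmul a b => simp [p153, Algebra.TensorProduct.one_def]
    | add w₁ w₂ h₁ h₂ => simp only [map_add, TensorProduct.add_tmul, TensorProduct.tmul_add, h₁, h₂]

lemma L2b (u : H ⊗[K] H) :
    (Algebra.TensorProduct.map (AlgHom.id K (H ⊗[K] H)) (deltaHe K H)) (f14 K H u)
    = p146 K H ((Algebra.TensorProduct.map (AlgHom.id K H) (Bialgebra.comulAlgHom K H)) u) := by
  induction u using TensorProduct.induction_on with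
  | zero => simp
  | add u v hu hv => simp only [map_add, hu, hv]
  | tmul x y =>
    simp only [f14, map_tmul, includeLeft_apply, includeRight_apply, deltaHe, AlgHom.coe_comp,
      AlgHom.coe_id, AlgEquiv.toAlgHom_eq_coe, AlgHom.coe_coe, Function.comp_apply,
      Bialgebra.comulAlgHom_apply, map_one, id_eq]
    generalize (CoalgebraStruct.comul y : H ⊗[K] H) = w
    induction w using TensorProduct.induction_on with
    | zero => simp
    | tmul a b => simp [p146, Algebra.TensorProduct.one_def]
    | add w₁ w₂ h₁ h₂ => simp only [map_add, TensorProduct.add_tmul, TensorProduct.tmul_add, h₁, h₂]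

lemma L3a (u : H ⊗[K] H) :
    (Algebra.TensorProduct.map (AlgHom.id K (H ⊗[K] H))
      (Algebra.TensorProduct.includeLeft : (H ⊗[K] H) →ₐ[K] (H ⊗[K] H) ⊗[K] (H ⊗[K] H)))
      (f13 K H u) = g13x K H u := by
  induction u using TensorProduct.induction_on with
  | zero => simp
  | add u v hu hv => simp only [map_add, hu, hv]
  | tmul x y => simp [f13, g13x]

lemma L3b (u : H ⊗[K] H) :
    (Algebra.TensorProduct.map (AlgHom.id K (H ⊗[K] H))
      (Algebra.TensorProduct.includeLeft : (H ⊗[K] H) →ₐ[K] (H ⊗[K] H) ⊗[K] (H ⊗[K] H)))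
      (f14 K H u) = g14x K H u := by
  induction u using TensorProduct.induction_on with
  | zero => simp
  | add u v hu hv => simp only [map_add, hu, hv]
  | tmul x y => simp [f14, g14x]

lemma L4a (u : H ⊗[K] H) :
    (Algebra.TensorProduct.includeRight :
      ((H ⊗[K] H) ⊗[K] (H ⊗[K] H)) →ₐ[K] (H ⊗[K] H) ⊗[K] ((H ⊗[K] H) ⊗[K] (H ⊗[K] H)))
      (f13 K H u) = g35x K H u := by
  induction u using TensorProduct.induction_on with
  | zero => simp
  | add u v hu hv => simp only [map_add, hu, hv]
  | tmul x y => simp [f13, g35x]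

lemma L4b (u : H ⊗[K] H) :
    (Algebra.TensorProduct.includeRight :
      ((H ⊗[K] H) ⊗[K] (H ⊗[K] H)) →ₐ[K] (H ⊗[K] H) ⊗[K] ((H ⊗[K] H) ⊗[K] (H ⊗[K] H)))
      (f14 K H u) = g36x K H u := by
  induction u using TensorProduct.induction_on with
  | zero => simp
  | add u v hu hv => simp only [map_add, hu, hv]
  | tmul x y => simp [f14, g36x]

/-! ### `Phi` computations -/

lemma Phi_e12 (u : H ⊗[K] H) :
    Phi K H (e12 K H u) = p135 K H ((Algebra.TensorProduct.assoc K K K H H H)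
      ((Algebra.TensorProduct.map (Bialgebra.comulAlgHom K H) (AlgHom.id K H)) u)) := by
  induction u using TensorProduct.induction_on with
  | zero => simp
  | add u v hu hv => simp only [map_add, hu, hv]
  | tmul x y =>
    simp only [e12, map_tmul, includeLeft_apply, AlgHom.coe_id, id_eq, Phi,
      Algebra.TensorProduct.lift_tmul, AlgHom.coe_comp, Function.comp_apply,
      Bialgebra.comulAlgHom_apply]
    generalize (CoalgebraStruct.comul x : H ⊗[K] H) = w
    induction w using TensorProduct.induction_on with
    | zero => simp [tzero_mul]
    | tmul a b => simp [g13x, g56x, Algebra.TensorProduct.one_def, p135]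
    | add w₁ w₂ h₁ h₂ => simp only [map_add, TensorProduct.add_tmul, TensorProduct.tmul_add, tadd_mul, h₁, h₂]

lemma Phi_e13 (u : H ⊗[K] H) :
    Phi K H (e13 K H u) = p136 K H ((Algebra.TensorProduct.assoc K K K H H H)
      ((Algebra.TensorProduct.map (Bialgebra.comulAlgHom K H) (AlgHom.id K H)) u)) := by
  induction u using TensorProduct.induction_on with
  | zero => simp
  | add u v hu hv => simp only [map_add, hu, hv]
  | tmul x y =>
    simp only [e13, map_tmul, includeRight_apply, AlgHom.coe_id, id_eq, Phi,
      Algebra.TensorProduct.lift_tmul, AlgHom.coe_comp, Function.comp_apply,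
      Bialgebra.comulAlgHom_apply]
    generalize (CoalgebraStruct.comul x : H ⊗[K] H) = w
    induction w using TensorProduct.induction_on with
    | zero => simp [tzero_mul]
    | tmul a b => simp [g13x, g56x, Algebra.TensorProduct.one_def, p136]
    | add w₁ w₂ h₁ h₂ => simp only [map_add, TensorProduct.add_tmul, TensorProduct.tmul_add, tadd_mul, h₁, h₂]

lemma PhiCop_e12 (u : H ⊗[K] H) :
    PhiCop K H (e12 K H u) = p315 K H ((Algebra.TensorProduct.assoc K K K H H H)
      ((Algebra.TensorProduct.map (Bialgebra.comulAlgHom K H) (AlgHom.id K H)) u)) := by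
  induction u using TensorProduct.induction_on with
  | zero => simp
  | add u v hu hv => simp only [map_add, hu, hv]
  | tmul x y =>
    simp only [e12, map_tmul, includeLeft_apply, AlgHom.coe_id, id_eq, PhiCop,
      Algebra.TensorProduct.lift_tmul, AlgHom.coe_comp, Function.comp_apply,
      AlgEquiv.toAlgHom_eq_coe, AlgHom.coe_coe, Bialgebra.comulAlgHom_apply]
    generalize (CoalgebraStruct.comul x : H ⊗[K] H) = w
    induction w using TensorProduct.induction_on with
    | zero => simp [tzero_mul]
    | tmul a b => simp [g13x, g56x, Algebra.TensorProduct.one_def, p315, p135, sw12]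
    | add w₁ w₂ h₁ h₂ => simp only [map_add, TensorProduct.add_tmul, TensorProduct.tmul_add, tadd_mul, h₁, h₂]

lemma PhiCop_e13 (u : H ⊗[K] H) :
    PhiCop K H (e13 K H u) = p316 K H ((Algebra.TensorProduct.assoc K K K H H H)
      ((Algebra.TensorProduct.map (Bialgebra.comulAlgHom K H) (AlgHom.id K H)) u)) := by
  induction u using TensorProduct.induction_on with
  | zero => simp
  | add u v hu hv => simp only [map_add, hu, hv]
  | tmul x y =>
    simp only [e13, map_tmul, includeRight_apply, AlgHom.coe_id, id_eq, PhiCop,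
      Algebra.TensorProduct.lift_tmul, AlgHom.coe_comp, Function.comp_apply,
      AlgEquiv.toAlgHom_eq_coe, AlgHom.coe_coe, Bialgebra.comulAlgHom_apply]
    generalize (CoalgebraStruct.comul x : H ⊗[K] H) = w
    induction w using TensorProduct.induction_on with
    | zero => simp [tzero_mul]
    | tmul a b => simp [g13x, g56x, Algebra.TensorProduct.one_def, p316, p136, sw12]
    | add w₁ w₂ h₁ h₂ => simp only [map_add, TensorProduct.add_tmul, TensorProduct.tmul_add, tadd_mul, h₁, h₂]

/-! ### The key conjugation lemma -/

lemma key (r : H ⊗[K] H)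
    (hr : ∀ x : H, (Algebra.TensorProduct.comm K H H) ((Bialgebra.comulAlgHom K H) x) * r
      = r * (Bialgebra.comulAlgHom K H) x) :
    ∀ v : H ⊗[K] (H ⊗[K] H),
      PhiCop K H v * g13x K H r = g13x K H r * Phi K H v := by
  intro v
  induction v using TensorProduct.induction_on with
  | zero => rw [map_zero, map_zero, tzero_mul, tmul_zero']
  | tmul x w =>
    simp only [Phi, PhiCop, Algebra.TensorProduct.lift_tmul, AlgHom.coe_comp,
      Function.comp_apply, AlgEquiv.toAlgHom_eq_coe, AlgHom.coe_coe]
    rw [massoc, ← mul_comm₂ (g13x K H) (g56x K H)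
        (fun a b c d => by simp [g13x, g56x, Algebra.TensorProduct.one_def]) r w,
      ← massoc, ← map_mul, AlgEquiv.coe_algHom, hr x, map_mul, massoc]
  | add v₁ v₂ h₁ h₂ => rw [map_add, map_add, tadd_mul, tmul_add', h₁, h₂]

/-! ### Counit computations -/

lemma c1x_incRight (h : H) :
    c1x K H ((Algebra.TensorProduct.includeRight : H →ₐ[K] H ⊗[K] H) h) = h := by
  simp [c1x]

lemma c2x_incLeft (h : H) :
    c2x K H ((Algebra.TensorProduct.includeLeft : H →ₐ[K] H ⊗[K] H) h) = h := by
  simp [c2x]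

lemma caux1 (u : H ⊗[K] H) :
    qx K H ((Algebra.TensorProduct.assoc K K K H H H)
      ((Algebra.TensorProduct.map (Bialgebra.comulAlgHom K H) (AlgHom.id K H)) u)) = u := by
  induction u using TensorProduct.induction_on with
  | zero => simp
  | add u v hu hv => simp only [map_add, hu, hv]
  | tmul x y =>
    have aux : ∀ w : H ⊗[K] H, qx K H ((Algebra.TensorProduct.assoc K K K H H H) (w ⊗ₜ y))
        = (TensorProduct.rid K H) ((LinearMap.lTensor H Coalgebra.counit) w) ⊗ₜ y := by
      intro w
      induction w using TensorProduct.induction_on with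
      | zero => simp
      | tmul a b =>
        simp [qx, c1x, TensorProduct.smul_tmul']
      | add w₁ w₂ h₁ h₂ => simp only [TensorProduct.add_tmul, map_add, h₁, h₂]
    simp only [map_tmul, AlgHom.coe_id, id_eq, Bialgebra.comulAlgHom_apply]
    rw [aux (CoalgebraStruct.comul x)]
    rw [Coalgebra.lTensor_counit_comul (R := K) x]
    simp

lemma caux2 (u : H ⊗[K] H) :
    qx K H ((Algebra.TensorProduct.map (AlgHom.id K H) (Bialgebra.comulAlgHom K H)) u) = u := by
  have aux : ∀ w : H ⊗[K] H, c1x K H w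
      = (TensorProduct.lid K H) ((LinearMap.rTensor H Coalgebra.counit) w) := by
    intro w
    induction w using TensorProduct.induction_on with
    | zero => simp
    | tmul a b => simp [c1x]
    | add w₁ w₂ h₁ h₂ => simp only [map_add, h₁, h₂]
  induction u using TensorProduct.induction_on with
  | zero => simp
  | add u v hu hv => simp only [map_add, hu, hv]
  | tmul x y =>
    simp only [map_tmul, AlgHom.coe_id, id_eq, Bialgebra.comulAlgHom_apply, qx]
    rw [aux (CoalgebraStruct.comul y)]
    rw [Coalgebra.rTensor_counit_comul (R := K) y]
    simp

lemma q_e13 (v : H ⊗[K] H) : qx K H (e13 K H v) = v := by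
  induction v using TensorProduct.induction_on with
  | zero => simp
  | add u v hu hv => simp only [map_add, hu, hv]
  | tmul a b => simp [qx, e13, c1x]

lemma q_e23 (v : H ⊗[K] H) :
    qx K H (e23 K H v) = (Algebra.TensorProduct.includeRight : H →ₐ[K] H ⊗[K] H) (c1x K H v) := by
  induction v using TensorProduct.induction_on with
  | zero => simp
  | add u v hu hv => simp only [map_add, hu, hv]
  | tmul a b => simp [qx, e23, c1x]

lemma q_e12 (v : H ⊗[K] H) :
    qx K H (e12 K H v) = (Algebra.TensorProduct.includeLeft : H →ₐ[K] H ⊗[K] H) (c2x K H v) := by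
  induction v using TensorProduct.induction_on with
  | zero => simp
  | add u v hu hv => simp only [map_add, hu, hv]
  | tmul a b => simp [qx, e12, c1x, c2x]

lemma CU1a (u : H ⊗[K] H) :
    (Algebra.TensorProduct.lid K (H ⊗[K] H))
      ((Algebra.TensorProduct.map (counitHe K H) (AlgHom.id K (H ⊗[K] H))) (f13 K H u))
    = (Algebra.TensorProduct.includeLeft : H →ₐ[K] H ⊗[K] H) (c1x K H u) := by
  induction u using TensorProduct.induction_on with
  | zero => simp
  | add u v hu hv => simp only [map_add, hu, hv]
  | tmul x y => simp [f13, counitHe, c1x]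

lemma CU1b (u : H ⊗[K] H) :
    (Algebra.TensorProduct.lid K (H ⊗[K] H))
      ((Algebra.TensorProduct.map (counitHe K H) (AlgHom.id K (H ⊗[K] H))) (f14 K H u))
    = (Algebra.TensorProduct.includeRight : H →ₐ[K] H ⊗[K] H) (c1x K H u) := by
  induction u using TensorProduct.induction_on with
  | zero => simp
  | add u v hu hv => simp only [map_add, hu, hv]
  | tmul x y => simp [f14, counitHe, c1x]

lemma CU2a (u : H ⊗[K] H) :
    (Algebra.TensorProduct.rid K K (H ⊗[K] H))
      ((Algebra.TensorProduct.map (AlgHom.id K (H ⊗[K] H)) (counitHe K H)) (f13 K H u))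
    = (Algebra.TensorProduct.includeLeft : H →ₐ[K] H ⊗[K] H) (c2x K H u) := by
  induction u using TensorProduct.induction_on with
  | zero => simp
  | add u v hu hv => simp only [map_add, hu, hv]
  | tmul x y => simp [f13, counitHe, c2x]

lemma CU2b (u : H ⊗[K] H) :
    (Algebra.TensorProduct.rid K K (H ⊗[K] H))
      ((Algebra.TensorProduct.map (AlgHom.id K (H ⊗[K] H)) (counitHe K H)) (f14 K H u))
    = (Algebra.TensorProduct.includeLeft : H →ₐ[K] H ⊗[K] H) (c2x K H u) := by
  induction u using TensorProduct.induction_on with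
  | zero => simp
  | add u v hu hv => simp only [map_add, hu, hv]
  | tmul x y => simp [f14, counitHe, c2x]

theorem F_is_twist_main
    (R : (H ⊗[K] H)ˣ)
    (h1 : ∀ x : H, (Algebra.TensorProduct.comm K H H) ((Bialgebra.comulAlgHom K H) x)
        * (R : H ⊗[K] H) = (R : H ⊗[K] H) * (Bialgebra.comulAlgHom K H) x)
    (h21 : (Algebra.TensorProduct.assoc K K K H H H)
        ((Algebra.TensorProduct.map (Bialgebra.comulAlgHom K H) (AlgHom.id K H)) (R : H ⊗[K] H))
      = e13 K H (R : H ⊗[K] H) * e23 K H (R : H ⊗[K] H))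
    (h22 : (Algebra.TensorProduct.map (AlgHom.id K H) (Bialgebra.comulAlgHom K H)) (R : H ⊗[K] H)
      = e13 K H (R : H ⊗[K] H) * e12 K H (R : H ⊗[K] H)) :
    IsUnit (f13 K H (R : H ⊗[K] H) * f14 K H (R : H ⊗[K] H))
    ∧ (Algebra.TensorProduct.assoc K K K (H ⊗[K] H) (H ⊗[K] H) (H ⊗[K] H))
        ((Algebra.TensorProduct.map (deltaHe K H) (AlgHom.id K (H ⊗[K] H)))
          (f13 K H (R : H ⊗[K] H) * f14 K H (R : H ⊗[K] H)))
      * (Algebra.TensorProduct.map (AlgHom.id K (H ⊗[K] H))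
          (Algebra.TensorProduct.includeLeft : (H ⊗[K] H) →ₐ[K] (H ⊗[K] H) ⊗[K] (H ⊗[K] H)))
          (f13 K H (R : H ⊗[K] H) * f14 K H (R : H ⊗[K] H))
      = (Algebra.TensorProduct.map (AlgHom.id K (H ⊗[K] H)) (deltaHe K H))
          (f13 K H (R : H ⊗[K] H) * f14 K H (R : H ⊗[K] H))
      * (Algebra.TensorProduct.includeRight :
          ((H ⊗[K] H) ⊗[K] (H ⊗[K] H)) →ₐ[K] (H ⊗[K] H) ⊗[K] ((H ⊗[K] H) ⊗[K] (H ⊗[K] H)))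
          (f13 K H (R : H ⊗[K] H) * f14 K H (R : H ⊗[K] H))
    ∧ (Algebra.TensorProduct.lid K (H ⊗[K] H))
        ((Algebra.TensorProduct.map (counitHe K H) (AlgHom.id K (H ⊗[K] H)))
          (f13 K H (R : H ⊗[K] H) * f14 K H (R : H ⊗[K] H))) = 1
    ∧ (Algebra.TensorProduct.rid K K (H ⊗[K] H))
        ((Algebra.TensorProduct.map (AlgHom.id K (H ⊗[K] H)) (counitHe K H))
          (f13 K H (R : H ⊗[K] H) * f14 K H (R : H ⊗[K] H))) = 1 := by
  have hV1 : PhiCop K H (e12 K H (R : H ⊗[K] H) * e13 K H (R : H ⊗[K] H))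
      = g35x K H (R : H ⊗[K] H) * g15x K H (R : H ⊗[K] H)
        * (g36x K H (R : H ⊗[K] H) * g16x K H (R : H ⊗[K] H)) := by
    rw [map_mul, PhiCop_e12, PhiCop_e13, h21, map_mul, map_mul,
      p315_e13, p315_e23, p316_e13, p316_e23]
  have hV2 : Phi K H (e12 K H (R : H ⊗[K] H) * e13 K H (R : H ⊗[K] H))
      = g15x K H (R : H ⊗[K] H) * g35x K H (R : H ⊗[K] H)
        * (g16x K H (R : H ⊗[K] H) * g36x K H (R : H ⊗[K] H)) := by
    rw [map_mul, Phi_e12, Phi_e13, h21, map_mul, map_mul,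
      p135_e13, p135_e23, p136_e13, p136_e23]
  have hK := key (R : H ⊗[K] H) h1 (e12 K H (R : H ⊗[K] H) * e13 K H (R : H ⊗[K] H))
  have hc1 : c1x K H (R : H ⊗[K] H) = 1 := by
    have h0 := caux1 ((R : H ⊗[K] H))
    rw [h21, map_mul, q_e13, q_e23] at h0
    have h1' := (Units.mul_right_inj R).mp (h0.trans (mul_one _).symm)
    have h2' := congrArg (c1x K H) h1'
    rwa [c1x_incRight, map_one] at h2'
  have hc2 : c2x K H (R : H ⊗[K] H) = 1 := by
    have h0 := caux2 ((R : H ⊗[K] H))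
    rw [h22, map_mul, q_e13, q_e12] at h0
    have h1' := (Units.mul_right_inj R).mp (h0.trans (mul_one _).symm)
    have h2' := congrArg (c2x K H) h1'
    rwa [c2x_incLeft, map_one] at h2'
  refine ⟨((R.isUnit).map (f13 K H)).mul ((R.isUnit).map (f14 K H)), ?_, ?_, ?_⟩
  · simp only [map_mul]
    rw [L1a, L1b, L2a, L2b, L3a, L3b, L4a, L4b, h21, h22]
    simp only [map_mul]
    rw [p315_e13, p315_e23, p316_e13, p316_e23, p153_e13, p153_e12, p146_e13, p146_e12]
    rw [← hV1, ← massoc (PhiCop K H _) (g13x K H _) (g14x K H _), hK, hV2]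
    simp only [massoc]
    rw [mswap (comm_g35_g16 (R : H ⊗[K] H) (R : H ⊗[K] H)),
      ← comm_g14_g36 (R : H ⊗[K] H) (R : H ⊗[K] H),
      mswap ((comm_g14_g35 (R : H ⊗[K] H) (R : H ⊗[K] H)).symm)]
  · simp only [map_mul]
    rw [CU1a, CU1b, hc1, map_one, map_one, one_mul]
  · simp only [map_mul]
    rw [CU2a, CU2b, hc2, map_one, one_mul]

end EllipticDouble

namespace EllipticDouble

/-- `F = R^{1,3} R^{1,4}` is a twist for `H^e = H^{coop} ⊗ H`:
it is invertible, satisfies the cocycle condition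
`(Δ_{H^e} ⊗ id)(F) · (F ⊗ 1) = (id ⊗ Δ_{H^e})(F) · (1 ⊗ F)`, and the counit conditions. -/
theorem F_is_twist
    {K : Type*} [Field K] {H : Type*} [Ring H] [HopfAlgebra K H] [FiniteDimensional K H]
    (R : (H ⊗[K] H)ˣ) (hR : IsQuasitriangular K H R) :
    IsUnit (f13 K H (R : H ⊗[K] H) * f14 K H (R : H ⊗[K] H))
    ∧ (Algebra.TensorProduct.assoc K K K (H ⊗[K] H) (H ⊗[K] H) (H ⊗[K] H))
        ((Algebra.TensorProduct.map (deltaHe K H) (AlgHom.id K (H ⊗[K] H)))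
          (f13 K H (R : H ⊗[K] H) * f14 K H (R : H ⊗[K] H)))
      * (Algebra.TensorProduct.map (AlgHom.id K (H ⊗[K] H))
          (Algebra.TensorProduct.includeLeft : (H ⊗[K] H) →ₐ[K] (H ⊗[K] H) ⊗[K] (H ⊗[K] H)))
          (f13 K H (R : H ⊗[K] H) * f14 K H (R : H ⊗[K] H))
      = (Algebra.TensorProduct.map (AlgHom.id K (H ⊗[K] H)) (deltaHe K H))
          (f13 K H (R : H ⊗[K] H) * f14 K H (R : H ⊗[K] H))
      * (Algebra.TensorProduct.includeRight :
          ((H ⊗[K] H) ⊗[K] (H ⊗[K] H)) →ₐ[K] (H ⊗[K] H) ⊗[K] ((H ⊗[K] H) ⊗[K] (H ⊗[K] H)))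
          (f13 K H (R : H ⊗[K] H) * f14 K H (R : H ⊗[K] H))
    ∧ (Algebra.TensorProduct.lid K (H ⊗[K] H))
        ((Algebra.TensorProduct.map (counitHe K H) (AlgHom.id K (H ⊗[K] H)))
          (f13 K H (R : H ⊗[K] H) * f14 K H (R : H ⊗[K] H))) = 1
    ∧ (Algebra.TensorProduct.rid K K (H ⊗[K] H))
        ((Algebra.TensorProduct.map (AlgHom.id K (H ⊗[K] H)) (counitHe K H))
          (f13 K H (R : H ⊗[K] H) * f14 K H (R : H ⊗[K] H))) = 1 := by
  obtain ⟨h1, h21, h22⟩ := hR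
  exact F_is_twist_main R h1 h21 h22

end EllipticDouble
end
end

section
/- Let B be a unital associative K-algebra and let X, Y be invertible elements of B⊗H, each satisfying the 1-twisted reflection axiom (id_B⊗Δ)(Z) = (1_B⊗D)·(R^{1,2})^{-1}·Z^{0,2}·R^{1,2}·Z^{0,1}, and together satisfying the elliptic commutation relation X^{0,1}·R^{2,1}·Y^{0,2} = R^{2,1}·Y^{0,2}·R^{1,2}·X^{0,1}·R^{2,1}. Then: (a) the pair (X, Y·X^{-1}) again consists of elements each satisfying the 1-twisted reflection axiom and together satisfying the elliptic commutation relation; and (b) the same holds for the pair (Y, Y·X^{-1}·Y^{-1}). In particular, Y·X^{-1} and Y·X^{-1}·Y^{-1} satisfy the 1-twisted reflection axiom. -/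
open scoped TensorProduct
open Algebra.TensorProduct

noncomputable section

/-! ### Auxiliary machinery -/

namespace EllipticDouble
section Aux

/-- Purely group-theoretic core of the argument. -/
theorem sl2_core {G : Type*} [Group G] (ρ r x1 x2 y1 y2 : G)
    (hXY : x1*ρ*y2 = ρ*y2*r*x1*ρ)
    (hE2 : x2*r*y1 = r*y1*(ρ*x2*r))
    (hE3X : ρ*x2*r*x1 = x1*(ρ*x2*r))
    (hE3Y : ρ*y2*r*y1 = y1*(ρ*y2*r))
    (hsY : r*y1*ρ*y2 = y2*(r*y1*ρ)) :
    ((ρ*y2*r*y1)*(ρ*x2*r*x1)⁻¹ = ρ*(y2*x2⁻¹)*r*(y1*x1⁻¹))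
    ∧ ((ρ*y2*r*y1)*(ρ*x2*r*x1)⁻¹*(ρ*y2*r*y1)⁻¹ = ρ*(y2*x2⁻¹*y2⁻¹)*r*(y1*x1⁻¹*y1⁻¹))
    ∧ (y1*ρ*(y2*x2⁻¹*y2⁻¹) = ρ*(y2*x2⁻¹*y2⁻¹)*r*y1*ρ) := by
  have cX : Commute (ρ*x2*r) x1 := hE3X
  have star : x2*(r*y1*x1⁻¹) = (r*y1*x1⁻¹)*(ρ*x2*r) := by
    calc x2*(r*y1*x1⁻¹) = (x2*r*y1)*x1⁻¹ := by group
      _ = (r*y1)*((ρ*x2*r)*x1⁻¹) := by rw [hE2]; group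
      _ = (r*y1)*(x1⁻¹*(ρ*x2*r)) := by rw [cX.inv_right.eq]
      _ = (r*y1*x1⁻¹)*(ρ*x2*r) := by group
  have Ea : r*y1*x1⁻¹*r⁻¹*x2⁻¹*ρ⁻¹ = x2⁻¹*(r*y1*x1⁻¹) := by
    calc r*y1*x1⁻¹*r⁻¹*x2⁻¹*ρ⁻¹
        = x2⁻¹*(x2*(r*y1*x1⁻¹))*r⁻¹*x2⁻¹*ρ⁻¹ := by group
      _ = x2⁻¹*((r*y1*x1⁻¹)*(ρ*x2*r))*r⁻¹*x2⁻¹*ρ⁻¹ := by rw [star]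
      _ = x2⁻¹*(r*y1*x1⁻¹) := by group
  have goal1 : (ρ*y2*r*y1)*(ρ*x2*r*x1)⁻¹ = ρ*(y2*x2⁻¹)*r*(y1*x1⁻¹) := by
    calc (ρ*y2*r*y1)*(ρ*x2*r*x1)⁻¹
        = (ρ*y2)*(r*y1*x1⁻¹*r⁻¹*x2⁻¹*ρ⁻¹) := by group
      _ = (ρ*y2)*(x2⁻¹*(r*y1*x1⁻¹)) := by rw [Ea]
      _ = ρ*(y2*x2⁻¹)*r*(y1*x1⁻¹) := by group
  have ddag : y1*x1*ρ*y2 = ρ*y2*r*(y1*x1)*ρ := by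
    calc y1*x1*ρ*y2 = y1*(x1*ρ*y2) := by group
      _ = y1*(ρ*y2*r*x1*ρ) := by rw [hXY]
      _ = (y1*(ρ*y2*r))*(x1*ρ) := by group
      _ = (ρ*y2*r*y1)*(x1*ρ) := by rw [← hE3Y]
      _ = ρ*y2*r*(y1*x1)*ρ := by group
  have h2 : ρ*y2*ρ⁻¹*x1⁻¹*y1⁻¹ = x1⁻¹*y1⁻¹*(ρ*y2*r) := by
    calc ρ*y2*ρ⁻¹*x1⁻¹*y1⁻¹
        = x1⁻¹*y1⁻¹*((y1*x1*ρ*y2)*ρ⁻¹*x1⁻¹*y1⁻¹) := by group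
      _ = x1⁻¹*y1⁻¹*((ρ*y2*r*(y1*x1)*ρ)*ρ⁻¹*x1⁻¹*y1⁻¹) := by rw [ddag]
      _ = x1⁻¹*y1⁻¹*(ρ*y2*r) := by group
  have Eb : y2*(r*(y1*x1⁻¹*y1⁻¹)) = (r*(y1*x1⁻¹*y1⁻¹))*(ρ*y2*r) := by
    calc y2*(r*(y1*x1⁻¹*y1⁻¹))
        = (y2*(r*y1*ρ))*(ρ⁻¹*x1⁻¹*y1⁻¹) := by group
      _ = ((r*y1*ρ)*y2)*(ρ⁻¹*x1⁻¹*y1⁻¹) := by rw [← hsY]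
      _ = (r*y1)*(ρ*y2*ρ⁻¹*x1⁻¹*y1⁻¹) := by group
      _ = (r*y1)*(x1⁻¹*y1⁻¹*(ρ*y2*r)) := by rw [h2]
      _ = (r*(y1*x1⁻¹*y1⁻¹))*(ρ*y2*r) := by group
  have Ebc : r*(y1*x1⁻¹*y1⁻¹)*r⁻¹*y2⁻¹*ρ⁻¹ = y2⁻¹*(r*(y1*x1⁻¹*y1⁻¹)) := by
    calc r*(y1*x1⁻¹*y1⁻¹)*r⁻¹*y2⁻¹*ρ⁻¹
        = y2⁻¹*(y2*(r*(y1*x1⁻¹*y1⁻¹)))*r⁻¹*y2⁻¹*ρ⁻¹ := by group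
      _ = y2⁻¹*((r*(y1*x1⁻¹*y1⁻¹))*(ρ*y2*r))*r⁻¹*y2⁻¹*ρ⁻¹ := by rw [Eb]
      _ = y2⁻¹*(r*(y1*x1⁻¹*y1⁻¹)) := by group
  have goal3 : (ρ*y2*r*y1)*(ρ*x2*r*x1)⁻¹*(ρ*y2*r*y1)⁻¹
      = ρ*(y2*x2⁻¹*y2⁻¹)*r*(y1*x1⁻¹*y1⁻¹) := by
    calc (ρ*y2*r*y1)*(ρ*x2*r*x1)⁻¹*(ρ*y2*r*y1)⁻¹
        = (ρ*(y2*x2⁻¹)*r*(y1*x1⁻¹))*(ρ*y2*r*y1)⁻¹ := by rw [goal1]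
      _ = (ρ*(y2*x2⁻¹))*(r*(y1*x1⁻¹*y1⁻¹)*r⁻¹*y2⁻¹*ρ⁻¹) := by group
      _ = (ρ*(y2*x2⁻¹))*(y2⁻¹*(r*(y1*x1⁻¹*y1⁻¹))) := by rw [Ebc]
      _ = ρ*(y2*x2⁻¹*y2⁻¹)*r*(y1*x1⁻¹*y1⁻¹) := by group
  have ddag2 : y2*x2*r*y1 = r*y1*ρ*(y2*x2)*r := by
    calc y2*x2*r*y1 = y2*(x2*r*y1) := by group
      _ = y2*(r*y1*(ρ*x2*r)) := by rw [hE2]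
      _ = (y2*(r*y1*ρ))*(x2*r) := by group
      _ = ((r*y1*ρ)*y2)*(x2*r) := by rw [← hsY]
      _ = r*y1*ρ*(y2*x2)*r := by group
  have h4 : r*y1*r⁻¹*x2⁻¹*y2⁻¹ = x2⁻¹*y2⁻¹*(r*y1*ρ) := by
    calc r*y1*r⁻¹*x2⁻¹*y2⁻¹
        = x2⁻¹*y2⁻¹*((y2*x2*r*y1)*r⁻¹*x2⁻¹*y2⁻¹) := by group
      _ = x2⁻¹*y2⁻¹*((r*y1*ρ*(y2*x2)*r)*r⁻¹*x2⁻¹*y2⁻¹) := by rw [ddag2]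
      _ = x2⁻¹*y2⁻¹*(r*y1*ρ) := by group
  have goal4 : y1*ρ*(y2*x2⁻¹*y2⁻¹) = ρ*(y2*x2⁻¹*y2⁻¹)*r*y1*ρ := by
    calc y1*ρ*(y2*x2⁻¹*y2⁻¹)
        = (y1*(ρ*y2*r))*(r⁻¹*x2⁻¹*y2⁻¹) := by group
      _ = (ρ*y2*r*y1)*(r⁻¹*x2⁻¹*y2⁻¹) := by rw [← hE3Y]
      _ = (ρ*y2)*(r*y1*r⁻¹*x2⁻¹*y2⁻¹) := by group
      _ = (ρ*y2)*(x2⁻¹*y2⁻¹*(r*y1*ρ)) := by rw [h4]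
      _ = ρ*(y2*x2⁻¹*y2⁻¹)*r*y1*ρ := by group
  exact ⟨goal1, goal3, goal4⟩

/-- The second elliptic relation for the pair `(X, Y·X⁻¹)` (a separate small piece). -/
theorem sl2_core2 {G : Type*} [Group G] (ρ r x1 x2 y2 : G)
    (hXY : x1*ρ*y2 = ρ*y2*r*x1*ρ)
    (hsX : r*x1*ρ*x2 = x2*(r*x1*ρ)) :
    x1*ρ*(y2*x2⁻¹) = ρ*(y2*x2⁻¹)*r*x1*ρ := by
  have cX' : Commute (r*x1*ρ) x2 := hsX
  calc x1*ρ*(y2*x2⁻¹) = (x1*ρ*y2)*x2⁻¹ := by group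
    _ = (ρ*y2)*((r*x1*ρ)*x2⁻¹) := by rw [hXY]; group
    _ = (ρ*y2)*(x2⁻¹*(r*x1*ρ)) := by rw [cX'.inv_right.eq]
    _ = ρ*(y2*x2⁻¹)*r*x1*ρ := by group

variable {K : Type*} [Field K] {H : Type*} [Ring H] [HopfAlgebra K H]
  {B : Type*} [Ring B] [Algebra K B]

/-- The embedding `B ⊗ H → B ⊗ H ⊗ H` on legs `0,1`, as an algebra map. -/
def f1h : B ⊗[K] H →ₐ[K] B ⊗[K] (H ⊗[K] H) :=
  Algebra.TensorProduct.map (AlgHom.id K B)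
    (Algebra.TensorProduct.includeLeft : H →ₐ[K] H ⊗[K] H)

/-- The embedding `B ⊗ H → B ⊗ H ⊗ H` on legs `0,2`, as an algebra map. -/
def f2h : B ⊗[K] H →ₐ[K] B ⊗[K] (H ⊗[K] H) :=
  Algebra.TensorProduct.map (AlgHom.id K B)
    (Algebra.TensorProduct.includeRight : H →ₐ[K] H ⊗[K] H)

/-- `id_B ⊗ Δ` as an algebra map. -/
def d2h : B ⊗[K] H →ₐ[K] B ⊗[K] (H ⊗[K] H) :=
  Algebra.TensorProduct.map (AlgHom.id K B) (Bialgebra.comulAlgHom K H)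

/-- `1_B ⊗ (flip)` on `B ⊗ H ⊗ H`. -/
def sg : B ⊗[K] (H ⊗[K] H) →ₐ[K] B ⊗[K] (H ⊗[K] H) :=
  Algebra.TensorProduct.map (AlgHom.id K B) (Algebra.TensorProduct.comm K H H).toAlgHom

lemma comm_comm (w : H ⊗[K] H) :
    (Algebra.TensorProduct.comm K H H) ((Algebra.TensorProduct.comm K H H) w) = w := by
  induction w using TensorProduct.induction_on with
  | zero => simp
  | tmul a b => simp
  | add a b ha hb => simp [map_add, ha, hb]

lemma sg_f1h (Z : B ⊗[K] H) : sg (f1h Z) = f2h Z := by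
  induction Z using TensorProduct.induction_on with
  | zero => simp
  | tmul a b => simp [sg, f1h, f2h]
  | add a b ha hb => simp only [map_add, ha, hb]

lemma sg_f2h (Z : B ⊗[K] H) : sg (f2h Z) = f1h Z := by
  induction Z using TensorProduct.induction_on with
  | zero => simp
  | tmul a b => simp [sg, f1h, f2h]
  | add a b ha hb => simp only [map_add, ha, hb]

lemma sg_inc2 (W : H ⊗[K] H) :
    sg (inc2 W : B ⊗[K] (H ⊗[K] H))
      = inc2 ((Algebra.TensorProduct.comm K H H) W) := by
  simp [sg, inc2]

lemma sg_d2h (Rv : H ⊗[K] H)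
    (hR1 : ∀ x : H, (Algebra.TensorProduct.comm K H H) ((Bialgebra.comulAlgHom K H) x) * Rv
      = Rv * (Bialgebra.comulAlgHom K H) x) (Z : B ⊗[K] H) :
    sg (d2h Z) * (inc2 Rv : B ⊗[K] (H ⊗[K] H)) = inc2 Rv * d2h Z := by
  induction Z using TensorProduct.induction_on with
  | zero => simp
  | tmul b h =>
      simp only [d2h, sg, inc2, Algebra.TensorProduct.map_tmul, AlgHom.coe_id, id_eq,
        AlgEquiv.toAlgHom_eq_coe, AlgHom.coe_coe, Algebra.TensorProduct.includeRight_apply,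
        Algebra.TensorProduct.tmul_mul_tmul, mul_one, one_mul]
      exact congrArg _ (hR1 h)
  | add a b ha hb => simp only [map_add, add_mul, mul_add, ha, hb]

/-- `f1h` as a monoid hom. -/
def f1m : B ⊗[K] H →* B ⊗[K] (H ⊗[K] H) := (f1h : B ⊗[K] H →ₐ[K] _).toRingHom.toMonoidHom

/-- `f2h` as a monoid hom. -/
def f2m : B ⊗[K] H →* B ⊗[K] (H ⊗[K] H) := (f2h : B ⊗[K] H →ₐ[K] _).toRingHom.toMonoidHom

/-- `d2h` as a monoid hom. -/
def d2m : B ⊗[K] H →* B ⊗[K] (H ⊗[K] H) := (d2h : B ⊗[K] H →ₐ[K] _).toRingHom.toMonoidHom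

/-- `inc2` as a monoid hom. -/
def incm : (H ⊗[K] H) →* B ⊗[K] (H ⊗[K] H) :=
  (Algebra.TensorProduct.includeRight :
    (H ⊗[K] H) →ₐ[K] B ⊗[K] (H ⊗[K] H)).toRingHom.toMonoidHom

/-- the flip of `H ⊗ H` as a monoid hom. -/
def cm : (H ⊗[K] H) →* (H ⊗[K] H) :=
  (Algebra.TensorProduct.comm K H H).toAlgHom.toRingHom.toMonoidHom

lemma leg01_eq (Z : B ⊗[K] H) : leg01 Z = f1h Z := rfl
lemma leg02_eq (Z : B ⊗[K] H) : leg02 Z = f2h Z := rfl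

end Aux
end EllipticDouble

namespace EllipticDouble

set_option maxHeartbeats 2000000 in
/-- The `SL₂(ℤ)`-type moves `(X,Y) ↦ (X, Y·X⁻¹)` and
`(X,Y) ↦ (Y, Y·X⁻¹·Y⁻¹)` preserve the pair of conditions "both entries satisfy the
1-twisted reflection axiom and together they satisfy the elliptic commutation relation". -/
theorem sl2_moves_preserve_relations
    {K : Type*} [Field K] {H : Type*} [Ring H] [HopfAlgebra K H] [FiniteDimensional K H]
    (R : (H ⊗[K] H)ˣ) (hR : IsQuasitriangular K H R)
    {B : Type*} [Ring B] [Algebra K B] (X Y : (B ⊗[K] H)ˣ)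
    (hX : ReflAxiom R 1 (X : B ⊗[K] H)) (hY : ReflAxiom R 1 (Y : B ⊗[K] H))
    (hXY : EllRel R (X : B ⊗[K] H) (Y : B ⊗[K] H)) :
    (ReflAxiom R 1 (X : B ⊗[K] H)
      ∧ ReflAxiom R 1 ((Y * X⁻¹ : (B ⊗[K] H)ˣ) : B ⊗[K] H)
      ∧ EllRel R (X : B ⊗[K] H) ((Y * X⁻¹ : (B ⊗[K] H)ˣ) : B ⊗[K] H))
    ∧ (ReflAxiom R 1 (Y : B ⊗[K] H)
      ∧ ReflAxiom R 1 ((Y * X⁻¹ * Y⁻¹ : (B ⊗[K] H)ˣ) : B ⊗[K] H)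
      ∧ EllRel R (Y : B ⊗[K] H) ((Y * X⁻¹ * Y⁻¹ : (B ⊗[K] H)ˣ) : B ⊗[K] H)) := by
  obtain ⟨hR1, -, -⟩ := hR
  set Rv : H ⊗[K] H := (R : H ⊗[K] H) with hRvdef
  set τRv : H ⊗[K] H := (Algebra.TensorProduct.comm K H H) Rv with hτRvdef
  -- the leading coefficient in the reflection axiom simplifies to `1 ⊗ τ(R)`
  have hD : (inc2 (((Dbraid K H R) ^ (1:ℤ) : (H ⊗[K] H)ˣ) : H ⊗[K] H) : B ⊗[K] (H ⊗[K] H))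
      * inc2 ((R⁻¹ : (H ⊗[K] H)ˣ) : H ⊗[K] H) = inc2 τRv := by
    rw [zpow_one]
    show (Algebra.TensorProduct.includeRight : (H ⊗[K] H) →ₐ[K] B ⊗[K] (H ⊗[K] H)) _
        * (Algebra.TensorProduct.includeRight : (H ⊗[K] H) →ₐ[K] B ⊗[K] (H ⊗[K] H)) _
        = (Algebra.TensorProduct.includeRight : (H ⊗[K] H) →ₐ[K] B ⊗[K] (H ⊗[K] H)) τRv
    rw [← map_mul]
    congr 1
    show τRv * Rv * ((R⁻¹ : (H ⊗[K] H)ˣ) : H ⊗[K] H) = τRv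
    rw [mul_assoc, Units.mul_inv, mul_one]
  have unfoldRefl : ∀ Z : B ⊗[K] H, ReflAxiom R 1 Z ↔
      d2h Z = inc2 τRv * f2h Z * inc2 Rv * f1h Z := by
    intro Z
    unfold ReflAxiom
    rw [hD]
    exact Iff.rfl
  have unfoldEll : ∀ Z W : B ⊗[K] H, EllRel R Z W ↔
      f1h Z * inc2 τRv * f2h W
        = inc2 τRv * f2h W * inc2 Rv * f1h Z * inc2 τRv := fun _ _ => Iff.rfl
  -- ring-level forms of the hypotheses
  have hXr := (unfoldRefl _).mp hX
  have hYr := (unfoldRefl _).mp hY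
  have hXYr := (unfoldEll _ _).mp hXY
  -- σ-image of the elliptic relation
  have hE2r : f2h (X : B ⊗[K] H) * inc2 Rv * f1h (Y : B ⊗[K] H)
      = inc2 Rv * f1h (Y : B ⊗[K] H) * inc2 τRv * f2h (X : B ⊗[K] H) * inc2 Rv := by
    have h := congrArg sg hXYr
    simp only [map_mul, sg_f1h, sg_f2h, sg_inc2, hτRvdef, comm_comm] at h
    exact h
  -- reflection equations for X and Y
  have E3r : ∀ Z : (B ⊗[K] H)ˣ, ReflAxiom R 1 (Z : B ⊗[K] H) →
      inc2 τRv * f2h (Z : B ⊗[K] H) * inc2 Rv * f1h (Z : B ⊗[K] H)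
        = f1h (Z : B ⊗[K] H) * (inc2 τRv * (f2h (Z : B ⊗[K] H) * inc2 Rv)) := by
    intro Z hZ
    have hZr := (unfoldRefl _).mp hZ
    have hsd := sg_d2h Rv hR1 (Z : B ⊗[K] H)
    have sgZ : sg (d2h (Z : B ⊗[K] H))
        = inc2 Rv * f1h (Z : B ⊗[K] H) * inc2 τRv * f2h (Z : B ⊗[K] H) := by
      have h := congrArg sg hZr
      simp only [map_mul, sg_f1h, sg_f2h, sg_inc2, hτRvdef, comm_comm] at h
      exact h
    rw [sgZ] at hsd
    -- hsd : inc2 Rv * f1h Z * inc2 τRv * f2h Z * inc2 Rv = inc2 Rv * d2h Z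
    have hsd' : inc2 Rv * (f1h (Z : B ⊗[K] H) * (inc2 τRv * (f2h (Z : B ⊗[K] H) * inc2 Rv)))
        = inc2 Rv * d2h (Z : B ⊗[K] H) := by
      simp only [← mul_assoc]
      exact hsd
    have hcan := (Units.mul_right_inj
      (Units.map (Algebra.TensorProduct.includeRight :
        (H ⊗[K] H) →ₐ[K] B ⊗[K] (H ⊗[K] H)).toRingHom.toMonoidHom R)).mp hsd'
    rw [hZr] at hcan
    exact hcan.symm
  have E3Xr := E3r X hX
  have E3Yr := E3r Y hY
  -- σ-images of the reflection equations
  have hsXr : inc2 Rv * f1h (X : B ⊗[K] H) * inc2 τRv * f2h (X : B ⊗[K] H)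
      = f2h (X : B ⊗[K] H) * (inc2 Rv * (f1h (X : B ⊗[K] H) * inc2 τRv)) := by
    have h := congrArg sg E3Xr
    simp only [map_mul, sg_f1h, sg_f2h, sg_inc2, hτRvdef, comm_comm] at h
    simp only [← mul_assoc] at h ⊢
    exact h
  have hsYr : inc2 Rv * f1h (Y : B ⊗[K] H) * inc2 τRv * f2h (Y : B ⊗[K] H)
      = f2h (Y : B ⊗[K] H) * (inc2 Rv * (f1h (Y : B ⊗[K] H) * inc2 τRv)) := by
    have h := congrArg sg E3Yr
    simp only [map_mul, sg_f1h, sg_f2h, sg_inc2, hτRvdef, comm_comm] at h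
    simp only [← mul_assoc] at h ⊢
    exact h
  -- pass to units
  set ρu : (B ⊗[K] (H ⊗[K] H))ˣ := Units.map incm (Units.map cm R) with hρu
  set ru : (B ⊗[K] (H ⊗[K] H))ˣ := Units.map incm R with hru
  set x1u := Units.map (f1m : B ⊗[K] H →* B ⊗[K] (H ⊗[K] H)) X with hx1u
  set x2u := Units.map (f2m : B ⊗[K] H →* B ⊗[K] (H ⊗[K] H)) X with hx2u
  set y1u := Units.map (f1m : B ⊗[K] H →* B ⊗[K] (H ⊗[K] H)) Y with hy1u
  set y2u := Units.map (f2m : B ⊗[K] H →* B ⊗[K] (H ⊗[K] H)) Y with hy2u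
  set dXu := Units.map (d2m : B ⊗[K] H →* B ⊗[K] (H ⊗[K] H)) X with hdXu
  set dYu := Units.map (d2m : B ⊗[K] H →* B ⊗[K] (H ⊗[K] H)) Y with hdYu
  have hXu : dXu = ρu * x2u * ru * x1u := Units.ext (by
    simp only [Units.val_mul]; exact hXr)
  have hYu : dYu = ρu * y2u * ru * y1u := Units.ext (by
    simp only [Units.val_mul]; exact hYr)
  have hXYu : x1u * ρu * y2u = ρu * y2u * ru * x1u * ρu := Units.ext (by
    simp only [Units.val_mul]; exact hXYr)
  have hE2u : x2u * ru * y1u = ru * y1u * (ρu * x2u * ru) := Units.ext (by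
    simp only [Units.val_mul, mul_assoc]
    simp only [mul_assoc] at hE2r
    exact hE2r)
  have hE3Xu : ρu * x2u * ru * x1u = x1u * (ρu * x2u * ru) := Units.ext (by
    simp only [Units.val_mul, mul_assoc]
    simp only [mul_assoc] at E3Xr
    exact E3Xr)
  have hE3Yu : ρu * y2u * ru * y1u = y1u * (ρu * y2u * ru) := Units.ext (by
    simp only [Units.val_mul, mul_assoc]
    simp only [mul_assoc] at E3Yr
    exact E3Yr)
  have hsXu : ru * x1u * ρu * x2u = x2u * (ru * x1u * ρu) := Units.ext (by
    simp only [Units.val_mul, mul_assoc]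
    simp only [mul_assoc] at hsXr
    exact hsXr)
  have hsYu : ru * y1u * ρu * y2u = y2u * (ru * y1u * ρu) := Units.ext (by
    simp only [Units.val_mul, mul_assoc]
    simp only [mul_assoc] at hsYr
    exact hsYr)
  obtain ⟨g1, g3, g4⟩ := sl2_core ρu ru x1u x2u y1u y2u hXYu hE2u hE3Xu hE3Yu hsYu
  have g2 := sl2_core2 ρu ru x1u x2u y2u hXYu hsXu
  -- final assembly
  have U1 : Units.map (d2m : B ⊗[K] H →* B ⊗[K] (H ⊗[K] H)) (Y * X⁻¹)
      = ρu * Units.map (f2m : B ⊗[K] H →* B ⊗[K] (H ⊗[K] H)) (Y * X⁻¹) * ru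
        * Units.map (f1m : B ⊗[K] H →* B ⊗[K] (H ⊗[K] H)) (Y * X⁻¹) := by
    simp only [map_mul, map_inv]
    rw [← hx1u, ← hx2u, ← hy1u, ← hy2u, ← hdXu, ← hdYu, hXu, hYu]
    exact g1
  have U3 : Units.map (d2m : B ⊗[K] H →* B ⊗[K] (H ⊗[K] H)) (Y * X⁻¹ * Y⁻¹)
      = ρu * Units.map (f2m : B ⊗[K] H →* B ⊗[K] (H ⊗[K] H)) (Y * X⁻¹ * Y⁻¹) * ru
        * Units.map (f1m : B ⊗[K] H →* B ⊗[K] (H ⊗[K] H)) (Y * X⁻¹ * Y⁻¹) := by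
    simp only [map_mul, map_inv]
    rw [← hx1u, ← hx2u, ← hy1u, ← hy2u, ← hdXu, ← hdYu, hXu, hYu]
    exact g3
  have U2 : x1u * ρu * Units.map (f2m : B ⊗[K] H →* B ⊗[K] (H ⊗[K] H)) (Y * X⁻¹)
      = ρu * Units.map (f2m : B ⊗[K] H →* B ⊗[K] (H ⊗[K] H)) (Y * X⁻¹) * ru * x1u * ρu := by
    simp only [map_mul, map_inv]
    rw [← hx2u, ← hy2u]
    exact g2
  have U4 : y1u * ρu * Units.map (f2m : B ⊗[K] H →* B ⊗[K] (H ⊗[K] H)) (Y * X⁻¹ * Y⁻¹)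
      = ρu * Units.map (f2m : B ⊗[K] H →* B ⊗[K] (H ⊗[K] H)) (Y * X⁻¹ * Y⁻¹) * ru * y1u * ρu := by
    simp only [map_mul, map_inv]
    rw [← hx2u, ← hy2u]
    exact g4
  refine ⟨⟨hX, ?_, ?_⟩, hY, ?_, ?_⟩
  · exact (unfoldRefl _).mpr (congrArg Units.val U1)
  · exact (unfoldEll _ _).mpr (congrArg Units.val U2)
  · exact (unfoldRefl _).mpr (congrArg Units.val U3)
  · exact (unfoldEll _ _).mpr (congrArg Units.val U4)

end EllipticDouble
end
end
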